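/- Under assumptions (A1)–(A4) with μ > 2, for every (f1,f2) ∈ 𝒦 and every η ∈ [s0,r0] one has (K1m/(μ+ν−1))·(s0^(−(μ+ν−1)) − η^(−(μ+ν−1))) ≤ H1(η; f1,f2) ≤ H1sup, where H1sup = K1M/(E1inf·(μ+ν−1)·s0^(μ+ν−1)), E1inf = exp(−[a·N1M/(L1m·(μ−1)·s0^(2μ−2)) + D1·K1M/(H_inf·L1m·(2μ+ν−1)·s0^(2μ+ν−1))]) and H_inf = (K1m/(μ+ν−1))·(s0^(−(μ+ν−1)) − r0^(−(μ+ν−1))). -/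

import Mathlib

open MeasureTheory Filter Topology

noncomputable section

/-- The bundle of fixed constants of the problem. -/
structure Cst where
  nu : ℝ
  mu : ℝ
  a : ℝ
  D1 : ℝ
  D2 : ℝ
  Q : ℝ
  D1s : ℝ
  D2s : ℝ
  L1m : ℝ
  L1M : ℝ
  N1m : ℝ
  N1M : ℝ
  K1m : ℝ
  K1M : ℝ
  L2m : ℝ
  L2M : ℝ
  N2m : ℝ
  N2M : ℝ
  K2m : ℝ
  K2M : ℝ
  Lt1 : ℝ
  Nt1 : ℝ
  Kt1 : ℝ
  Lt2 : ℝ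
  Nt2 : ℝ
  Kt2 : ℝ

/-- The space `C[s0,r0]`, modeled as real functions continuous on `[s0,r0]`. -/
def C1 (s0 r0 : ℝ) : Set (ℝ → ℝ) := {f | ContinuousOn f (Set.Icc s0 r0)}

/-- The set `ℳ ⊆ C_b[r0,∞)`: bounded continuous functions on `[r0,∞)` with
`f(r0) = 0` and `f(η) → -1` as `η → ∞`. -/
def Mset (r0 : ℝ) : Set (ℝ → ℝ) :=
  {f | ContinuousOn f (Set.Ici r0) ∧ (∃ C, ∀ x ∈ Set.Ici r0, |f x| ≤ C) ∧
    f r0 = 0 ∧ Tendsto f atTop (𝓝 (-1))}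

/-- Sup norm of `f` over the set `S`. -/
def supOn (S : Set ℝ) (f : ℝ → ℝ) : ℝ := ⨆ x : S, |f x.1|

/-- Norm of the difference of two pairs in `𝒦 = C[s0,r0] × ℳ`. -/
def pairNorm (s0 r0 : ℝ) (f1 f2 g1 g2 : ℝ → ℝ) : ℝ :=
  max (supOn (Set.Icc s0 r0) (f1 - g1)) (supOn (Set.Ici r0) (f2 - g2))

/-- Positivity assumptions on all the fixed constants and on `s0, r0`. -/
def PosC (c : Cst) (s0 r0 : ℝ) : Prop :=
  0 < c.a ∧ 0 < c.nu ∧ c.nu < 1 ∧ 2 < c.mu ∧ 0 < s0 ∧ s0 < r0 ∧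
  0 < c.D1 ∧ 0 < c.D2 ∧ 0 < c.Q ∧ 0 < c.D1s ∧ 0 < c.D2s ∧
  0 < c.L1m ∧ 0 < c.L1M ∧ 0 < c.N1m ∧ 0 < c.N1M ∧ 0 < c.K1m ∧ 0 < c.K1M ∧
  0 < c.L2m ∧ 0 < c.L2M ∧ 0 < c.N2m ∧ 0 < c.N2M ∧ 0 < c.K2m ∧ 0 < c.K2M ∧
  0 < c.Lt1 ∧ 0 < c.Nt1 ∧ 0 < c.Kt1 ∧ 0 < c.Lt2 ∧ 0 < c.Nt2 ∧ 0 < c.Kt2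

/-- Positivity assumptions on all the fixed constants (no `s0, r0`). -/
def PosCst (c : Cst) : Prop :=
  0 < c.a ∧ 0 < c.nu ∧ c.nu < 1 ∧ 2 < c.mu ∧
  0 < c.D1 ∧ 0 < c.D2 ∧ 0 < c.Q ∧ 0 < c.D1s ∧ 0 < c.D2s ∧
  0 < c.L1m ∧ 0 < c.L1M ∧ 0 < c.N1m ∧ 0 < c.N1M ∧ 0 < c.K1m ∧ 0 < c.K1M ∧
  0 < c.L2m ∧ 0 < c.L2M ∧ 0 < c.N2m ∧ 0 < c.N2M ∧ 0 < c.K2m ∧ 0 < c.K2M ∧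
  0 < c.Lt1 ∧ 0 < c.Nt1 ∧ 0 < c.Kt1 ∧ 0 < c.Lt2 ∧ 0 < c.Nt2 ∧ 0 < c.Kt2

/-- Assumptions (A1)–(A4): continuity of the images of `L, N, K`, the two-sided
bounds and the Lipschitz bounds. -/
def Assum (c : Cst) (s0 r0 : ℝ) (L1 N1 K1 L2 N2 K2 : (ℝ → ℝ) → ℝ → ℝ) : Prop :=
  (∀ f1 ∈ C1 s0 r0,
    ContinuousOn (L1 f1) (Set.Icc s0 r0) ∧ ContinuousOn (N1 f1) (Set.Icc s0 r0) ∧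
      ContinuousOn (K1 f1) (Set.Icc s0 r0)) ∧
  (∀ f2 ∈ Mset r0,
    ContinuousOn (L2 f2) (Set.Ici r0) ∧ ContinuousOn (N2 f2) (Set.Ici r0) ∧
      ContinuousOn (K2 f2) (Set.Ici r0)) ∧
  (∀ f1 ∈ C1 s0 r0, ∀ η ∈ Set.Icc s0 r0,
    c.L1m * η ^ c.mu ≤ L1 f1 η ∧ L1 f1 η ≤ c.L1M * η ^ c.mu ∧
    c.N1m * η ^ (-c.mu) ≤ N1 f1 η ∧ N1 f1 η ≤ c.N1M * η ^ (-c.mu) ∧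
    c.K1m * η ^ (-c.mu) ≤ K1 f1 η ∧ K1 f1 η ≤ c.K1M * η ^ (-c.mu)) ∧
  (∀ f2 ∈ Mset r0, ∀ η ∈ Set.Ici r0,
    c.L2m * η ^ c.mu ≤ L2 f2 η ∧ L2 f2 η ≤ c.L2M * η ^ c.mu ∧
    c.N2m * η ^ (-c.mu) ≤ N2 f2 η ∧ N2 f2 η ≤ c.N2M * η ^ (-c.mu) ∧
    c.K2m * η ^ (-c.mu) ≤ K2 f2 η ∧ K2 f2 η ≤ c.K2M * η ^ (-c.mu)) ∧
  (∀ f1 ∈ C1 s0 r0, ∀ g1 ∈ C1 s0 r0, ∀ η ∈ Set.Icc s0 r0,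
    |L1 f1 η - L1 g1 η| ≤ c.Lt1 * supOn (Set.Icc s0 r0) (f1 - g1) ∧
    |N1 f1 η - N1 g1 η| ≤ c.Nt1 * supOn (Set.Icc s0 r0) (f1 - g1) ∧
    |K1 f1 η - K1 g1 η| ≤ c.Kt1 * η ^ (-c.mu) * supOn (Set.Icc s0 r0) (f1 - g1)) ∧
  (∀ f2 ∈ Mset r0, ∀ g2 ∈ Mset r0, ∀ η ∈ Set.Ici r0,
    |L2 f2 η - L2 g2 η| ≤ c.Lt2 * supOn (Set.Ici r0) (f2 - g2) ∧
    |N2 f2 η - N2 g2 η| ≤ c.Nt2 * supOn (Set.Ici r0) (f2 - g2) ∧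
    |K2 f2 η - K2 g2 η| ≤ c.Kt2 * η ^ (-c.mu) * supOn (Set.Ici r0) (f2 - g2))

/-- `H(f1,f2) = ∫_{s0}^{r0} K(f1)(v)/v^ν dv + ∫_{r0}^{∞} K(f2)(v)/v^ν dv`. -/
def Hf (c : Cst) (s0 r0 : ℝ) (L1 N1 K1 L2 N2 K2 : (ℝ → ℝ) → ℝ → ℝ) (f1 f2 : ℝ → ℝ) : ℝ :=
  (∫ v in s0..r0, K1 f1 v / v ^ c.nu) + ∫ v in Set.Ioi r0, K2 f2 v / v ^ c.nu

/-- `E1(η; f1,f2)`. -/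
def E1f (c : Cst) (s0 r0 : ℝ) (L1 N1 K1 L2 N2 K2 : (ℝ → ℝ) → ℝ → ℝ) (f1 f2 : ℝ → ℝ)
    (η : ℝ) : ℝ :=
  Real.exp (-(∫ v in s0..η,
    (2 * c.a * v * (N1 f1 v / L1 f1 v)
      + c.D1 / Hf c s0 r0 L1 N1 K1 L2 N2 K2 f1 f2 * (K1 f1 v / (L1 f1 v * v ^ c.nu)))))

/-- `Φ1(η; f1,f2)`. -/
def Phi1f (c : Cst) (s0 r0 : ℝ) (L1 N1 K1 L2 N2 K2 : (ℝ → ℝ) → ℝ → ℝ) (f1 f2 : ℝ → ℝ)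
    (η : ℝ) : ℝ :=
  ∫ v in s0..η, E1f c s0 r0 L1 N1 K1 L2 N2 K2 f1 f2 v / (L1 f1 v * v ^ c.nu)

/-- `H1(η; f1,f2)`. -/
def H1f (c : Cst) (s0 r0 : ℝ) (L1 N1 K1 L2 N2 K2 : (ℝ → ℝ) → ℝ → ℝ) (f1 f2 : ℝ → ℝ)
    (η : ℝ) : ℝ :=
  ∫ v in s0..η, K1 f1 v / (v ^ c.nu * E1f c s0 r0 L1 N1 K1 L2 N2 K2 f1 f2 v)

/-- `G1(η; f1,f2)`. -/
def G1f (c : Cst) (s0 r0 : ℝ) (L1 N1 K1 L2 N2 K2 : (ℝ → ℝ) → ℝ → ℝ) (f1 f2 : ℝ → ℝ)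
    (η : ℝ) : ℝ :=
  ∫ v in s0..η, E1f c s0 r0 L1 N1 K1 L2 N2 K2 f1 f2 v
    * H1f c s0 r0 L1 N1 K1 L2 N2 K2 f1 f2 v / (L1 f1 v * v ^ c.nu)

/-- `V1(f1,f2)(η)`. -/
def V1f (c : Cst) (s0 r0 : ℝ) (L1 N1 K1 L2 N2 K2 : (ℝ → ℝ) → ℝ → ℝ) (f1 f2 : ℝ → ℝ)
    (η : ℝ) : ℝ :=
  s0 ^ c.nu * c.Q * Real.exp (-s0 ^ 2)
      * (Phi1f c s0 r0 L1 N1 K1 L2 N2 K2 f1 f2 r0 - Phi1f c s0 r0 L1 N1 K1 L2 N2 K2 f1 f2 η)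
    + c.D1s / Hf c s0 r0 L1 N1 K1 L2 N2 K2 f1 f2 ^ 2
      * (G1f c s0 r0 L1 N1 K1 L2 N2 K2 f1 f2 r0 - G1f c s0 r0 L1 N1 K1 L2 N2 K2 f1 f2 η)

/-- `E2(η; f1,f2)`. -/
def E2f (c : Cst) (s0 r0 : ℝ) (L1 N1 K1 L2 N2 K2 : (ℝ → ℝ) → ℝ → ℝ) (f1 f2 : ℝ → ℝ)
    (η : ℝ) : ℝ :=
  Real.exp (-(∫ v in r0..η,
    (2 * c.a * v * (N2 f2 v / L2 f2 v)
      + c.D2 / Hf c s0 r0 L1 N1 K1 L2 N2 K2 f1 f2 * (K2 f2 v / (L2 f2 v * v ^ c.nu)))))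

/-- `Φ2(η; f1,f2)`. -/
def Phi2f (c : Cst) (s0 r0 : ℝ) (L1 N1 K1 L2 N2 K2 : (ℝ → ℝ) → ℝ → ℝ) (f1 f2 : ℝ → ℝ)
    (η : ℝ) : ℝ :=
  ∫ v in r0..η, E2f c s0 r0 L1 N1 K1 L2 N2 K2 f1 f2 v / (L2 f2 v * v ^ c.nu)

/-- `Φ2(∞; f1,f2)`. -/
def Phi2I (c : Cst) (s0 r0 : ℝ) (L1 N1 K1 L2 N2 K2 : (ℝ → ℝ) → ℝ → ℝ) (f1 f2 : ℝ → ℝ) : ℝ :=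
  ∫ v in Set.Ioi r0, E2f c s0 r0 L1 N1 K1 L2 N2 K2 f1 f2 v / (L2 f2 v * v ^ c.nu)

/-- `H2(η; f1,f2)`. -/
def H2f (c : Cst) (s0 r0 : ℝ) (L1 N1 K1 L2 N2 K2 : (ℝ → ℝ) → ℝ → ℝ) (f1 f2 : ℝ → ℝ)
    (η : ℝ) : ℝ :=
  ∫ v in r0..η, K2 f2 v / (v ^ c.nu * E2f c s0 r0 L1 N1 K1 L2 N2 K2 f1 f2 v)

/-- `G2(η; f1,f2)`. -/
def G2f (c : Cst) (s0 r0 : ℝ) (L1 N1 K1 L2 N2 K2 : (ℝ → ℝ) → ℝ → ℝ) (f1 f2 : ℝ → ℝ)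
    (η : ℝ) : ℝ :=
  ∫ v in r0..η, E2f c s0 r0 L1 N1 K1 L2 N2 K2 f1 f2 v
    * H2f c s0 r0 L1 N1 K1 L2 N2 K2 f1 f2 v / (L2 f2 v * v ^ c.nu)

/-- `G2(∞; f1,f2) = lim_{η→∞} G2(η; f1,f2)`. -/
def G2I (c : Cst) (s0 r0 : ℝ) (L1 N1 K1 L2 N2 K2 : (ℝ → ℝ) → ℝ → ℝ) (f1 f2 : ℝ → ℝ) : ℝ :=
  limUnder atTop (G2f c s0 r0 L1 N1 K1 L2 N2 K2 f1 f2)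

/-- `V2(f1,f2)(η)`. -/
def V2f (c : Cst) (s0 r0 : ℝ) (L1 N1 K1 L2 N2 K2 : (ℝ → ℝ) → ℝ → ℝ) (f1 f2 : ℝ → ℝ)
    (η : ℝ) : ℝ :=
  (c.D2s / Hf c s0 r0 L1 N1 K1 L2 N2 K2 f1 f2 ^ 2 * G2I c s0 r0 L1 N1 K1 L2 N2 K2 f1 f2 - 1)
      * (Phi2f c s0 r0 L1 N1 K1 L2 N2 K2 f1 f2 η / Phi2I c s0 r0 L1 N1 K1 L2 N2 K2 f1 f2)
    - c.D2s / Hf c s0 r0 L1 N1 K1 L2 N2 K2 f1 f2 ^ 2 * G2f c s0 r0 L1 N1 K1 L2 N2 K2 f1 f2 η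

/-! Constants appearing in the estimates. -/

def Hinf (c : Cst) (s0 r0 : ℝ) : ℝ :=
  c.K1m / (c.mu + c.nu - 1) * (s0 ^ (-(c.mu + c.nu - 1)) - r0 ^ (-(c.mu + c.nu - 1)))

def Hsup (c : Cst) (s0 r0 : ℝ) : ℝ :=
  (c.K1M * s0 ^ (-(c.mu + c.nu - 1)) + c.K2M * r0 ^ (-(c.mu + c.nu - 1))) / (c.mu + c.nu - 1)

def Htil (c : Cst) (s0 r0 : ℝ) : ℝ :=
  (c.Kt1 * s0 ^ (-(c.mu + c.nu - 1)) + c.Kt2 * r0 ^ (-(c.mu + c.nu - 1))) / (c.mu + c.nu - 1)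

/-- Limit of `Hinf` as `r0 → ∞`. -/
def HinfI (c : Cst) (s0 : ℝ) : ℝ := c.K1m / (c.mu + c.nu - 1) * s0 ^ (-(c.mu + c.nu - 1))

/-- Limit of `Hsup` as `r0 → ∞`. -/
def HsupI (c : Cst) (s0 : ℝ) : ℝ := c.K1M * s0 ^ (-(c.mu + c.nu - 1)) / (c.mu + c.nu - 1)

/-- Limit of `Htil` as `r0 → ∞`. -/
def HtilI (c : Cst) (s0 : ℝ) : ℝ := c.Kt1 * s0 ^ (-(c.mu + c.nu - 1)) / (c.mu + c.nu - 1)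

/-- `E1inf` as a function of the value `h` of `Hinf`. -/
def E1infG (c : Cst) (s0 h : ℝ) : ℝ :=
  Real.exp (-(c.a * c.N1M / (c.L1m * (c.mu - 1) * s0 ^ (2 * c.mu - 2))
    + c.D1 * c.K1M / (h * c.L1m * (2 * c.mu + c.nu - 1) * s0 ^ (2 * c.mu + c.nu - 1))))

/-- `Ẽ1` as a function of the values `h` of `Hinf` and `ht` of `Htil`. -/
def E1tilG (c : Cst) (s0 h ht : ℝ) : ℝ :=
  2 * c.a * (c.Nt1 / (c.L1m * (c.mu - 2) * s0 ^ (c.mu - 2))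
      + c.N1M * c.Lt1 / (c.L1m ^ 2 * (3 * c.mu - 2) * s0 ^ (3 * c.mu - 2)))
    + c.D1 * (c.Kt1 / (h * c.L1m * (2 * c.mu + c.nu - 1) * s0 ^ (2 * c.mu + c.nu - 1))
      + c.K1M / (h * c.L1m)
        * (ht / (h * (2 * c.mu + c.nu - 1) * s0 ^ (2 * c.mu + c.nu - 1))
          + c.Lt1 / (c.L1m * (3 * c.mu + c.nu - 1) * s0 ^ (3 * c.mu + c.nu - 1))))

def Phi1tilG (c : Cst) (s0 h ht : ℝ) : ℝ :=
  E1tilG c s0 h ht / (c.L1m * (c.mu + c.nu - 1) * s0 ^ (c.mu + c.nu - 1))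
    + c.Lt1 / (c.L1m ^ 2 * (2 * c.mu + c.nu - 1) * s0 ^ (2 * c.mu + c.nu - 1))

def H1supG (c : Cst) (s0 h : ℝ) : ℝ :=
  c.K1M / (E1infG c s0 h * (c.mu + c.nu - 1) * s0 ^ (c.mu + c.nu - 1))

def H1tilG (c : Cst) (s0 h ht : ℝ) : ℝ :=
  (c.Kt1 + c.K1M * E1tilG c s0 h ht / E1infG c s0 h)
    / (E1infG c s0 h * (c.mu + c.nu - 1) * s0 ^ (c.mu + c.nu - 1))

def G1supG (c : Cst) (s0 h : ℝ) : ℝ :=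
  H1supG c s0 h / (c.L1m * (c.mu + c.nu - 1) * s0 ^ (c.mu + c.nu - 1))

def G1tilG (c : Cst) (s0 h ht : ℝ) : ℝ :=
  H1supG c s0 h * Phi1tilG c s0 h ht
    + H1tilG c s0 h ht / (c.L1m * (c.mu + c.nu - 1) * s0 ^ (c.mu + c.nu - 1))

/-- `ε1` as a function of the values `h` of `Hinf`, `hs` of `Hsup`, `ht` of `Htil`. -/
def eps1G (c : Cst) (s0 h hs ht : ℝ) : ℝ :=
  2 * s0 ^ c.nu * c.Q * Real.exp (-s0 ^ 2) * Phi1tilG c s0 h ht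
    + 2 * c.D1s * (2 * G1supG c s0 h * hs * ht / h ^ 4 + G1tilG c s0 h ht / h ^ 2)

def E1inf (c : Cst) (s0 r0 : ℝ) : ℝ := E1infG c s0 (Hinf c s0 r0)
def E1til (c : Cst) (s0 r0 : ℝ) : ℝ := E1tilG c s0 (Hinf c s0 r0) (Htil c s0 r0)
def Phi1til (c : Cst) (s0 r0 : ℝ) : ℝ := Phi1tilG c s0 (Hinf c s0 r0) (Htil c s0 r0)
def H1sup (c : Cst) (s0 r0 : ℝ) : ℝ := H1supG c s0 (Hinf c s0 r0)
def H1til (c : Cst) (s0 r0 : ℝ) : ℝ := H1tilG c s0 (Hinf c s0 r0) (Htil c s0 r0)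
def G1sup (c : Cst) (s0 r0 : ℝ) : ℝ := G1supG c s0 (Hinf c s0 r0)
def G1til (c : Cst) (s0 r0 : ℝ) : ℝ := G1tilG c s0 (Hinf c s0 r0) (Htil c s0 r0)
def eps1 (c : Cst) (s0 r0 : ℝ) : ℝ := eps1G c s0 (Hinf c s0 r0) (Hsup c s0 r0) (Htil c s0 r0)

/-- `j1(s0) = lim_{r0→∞} ε1(r0,s0)`: the same expression with `Hinf, Hsup, Htil`
replaced by their limits as `r0 → ∞`. -/
def j1 (c : Cst) (s0 : ℝ) : ℝ := eps1G c s0 (HinfI c s0) (HsupI c s0) (HtilI c s0)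

def E2inf (c : Cst) (s0 r0 : ℝ) : ℝ :=
  Real.exp (-(c.a * c.N2M / (c.L2m * (c.mu - 1) * r0 ^ (2 * c.mu - 2))
    + c.D2 * c.K2M / (Hinf c s0 r0 * c.L2m * (2 * c.mu + c.nu - 1) * r0 ^ (2 * c.mu + c.nu - 1))))

def E2til (c : Cst) (s0 r0 : ℝ) : ℝ :=
  2 * c.a * (c.Nt2 / (c.L2m * (c.mu - 2) * r0 ^ (c.mu - 2))
      + c.N2M * c.Lt2 / (c.L2m ^ 2 * (3 * c.mu - 2) * r0 ^ (3 * c.mu - 2)))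
    + c.D2 * (c.Kt2 / (Hinf c s0 r0 * c.L2m * (2 * c.mu + c.nu - 1) * r0 ^ (2 * c.mu + c.nu - 1))
      + c.K2M / (Hinf c s0 r0 * c.L2m)
        * (Htil c s0 r0 / (Hinf c s0 r0 * (2 * c.mu + c.nu - 1) * r0 ^ (2 * c.mu + c.nu - 1))
          + c.Lt2 / (c.L2m * (3 * c.mu + c.nu - 1) * r0 ^ (3 * c.mu + c.nu - 1))))

def Phi2til (c : Cst) (s0 r0 : ℝ) : ℝ :=
  E2til c s0 r0 / (c.L2m * (c.mu + c.nu - 1) * r0 ^ (c.mu + c.nu - 1))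
    + c.Lt2 / (c.L2m ^ 2 * (2 * c.mu + c.nu - 1) * r0 ^ (2 * c.mu + c.nu - 1))

/-- `Φ2inf(∞)(r0,s0)`. -/
def Phi2infC (c : Cst) (s0 r0 : ℝ) : ℝ :=
  E2inf c s0 r0 / (c.L2M * (c.mu + c.nu - 1) * r0 ^ (c.mu + c.nu - 1))

/-- `Φ2sup(r0)`. -/
def Phi2supC (c : Cst) (r0 : ℝ) : ℝ := 1 / (c.L2m * (c.mu + c.nu - 1) * r0 ^ (c.mu + c.nu - 1))

def H2sup (c : Cst) (s0 r0 : ℝ) : ℝ :=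
  c.K2M / (E2inf c s0 r0 * (c.mu + c.nu - 1) * r0 ^ (c.mu + c.nu - 1))

def H2til (c : Cst) (s0 r0 : ℝ) : ℝ :=
  (c.Kt2 + c.K2M * E2til c s0 r0 / E2inf c s0 r0)
    / (E2inf c s0 r0 * (c.mu + c.nu - 1) * r0 ^ (c.mu + c.nu - 1))

def G2sup (c : Cst) (s0 r0 : ℝ) : ℝ :=
  H2sup c s0 r0 / (c.L2m * (c.mu + c.nu - 1) * r0 ^ (c.mu + c.nu - 1))

def G2til (c : Cst) (s0 r0 : ℝ) : ℝ :=
  H2sup c s0 r0 * Phi2til c s0 r0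
    + H2til c s0 r0 / (c.L2m * (c.mu + c.nu - 1) * r0 ^ (c.mu + c.nu - 1))

def eps21 (c : Cst) (s0 r0 : ℝ) : ℝ := 2 * Phi2til c s0 r0 / Phi2infC c s0 r0

def eps22 (c : Cst) (s0 r0 : ℝ) : ℝ :=
  G2til c s0 r0 / Hinf c s0 r0 ^ 2
    + 2 * G2sup c s0 r0 * Hsup c s0 r0 * Htil c s0 r0 / Hinf c s0 r0 ^ 4

def eps23 (c : Cst) (s0 r0 : ℝ) : ℝ :=
  Phi2supC c r0 / Phi2infC c s0 r0 * eps22 c s0 r0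
    + G2sup c s0 r0 / Hinf c s0 r0 ^ 2 * eps21 c s0 r0

def eps2 (c : Cst) (s0 r0 : ℝ) : ℝ := eps21 c s0 r0 + eps22 c s0 r0 + eps23 c s0 r0

/-!
On `[s0, r0]` the rate in the exponent of `E1` is nonnegative, so `E1 ≤ 1`, and the bound
`K(f1)(v) ≥ K1m v^(-μ)` integrates to the lower bound on `H1`. For the upper bound, `H ≥ Hinf`
because the part of `H` over `(r0, ∞)` is nonnegative; with (A1) the rate is then dominated by
`(2a N1M / L1m) v^(1-2μ) + (D1 K1M / (Hinf L1m)) v^(-2μ-ν)`, whose integral from `s0` is at most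
the exponent in `E1inf`. Hence `E1 ≥ E1inf`, and the integrand of `H1` is at most
`(K1M / E1inf) v^(-μ-ν)`.
-/

open Set

lemma integral_rpow_neg_sub_one {x y q : ℝ} (hx : 0 < x) (hxy : x ≤ y) (hq : 0 < q) :
    ∫ v in x..y, v ^ (-q - 1) = (x ^ (-q) - y ^ (-q)) / q := by
  have h0 : (0 : ℝ) ∉ uIcc x y := by
    rw [uIcc_of_le hxy]
    exact fun h => hx.not_ge h.1
  rw [integral_rpow (Or.inr ⟨by linarith, h0⟩), sub_add_cancel]
  ring

lemma integral_mono_of_continuousOn {f g : ℝ → ℝ} {a b : ℝ} (hab : a ≤ b)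
    (hf : ContinuousOn f (Icc a b)) (hg : ContinuousOn g (Icc a b))
    (h : ∀ x ∈ Icc a b, f x ≤ g x) : ∫ x in a..b, f x ≤ ∫ x in a..b, g x :=
  intervalIntegral.integral_mono_on hab (hf.intervalIntegrable_of_Icc hab)
    (hg.intervalIntegrable_of_Icc hab) h

lemma continuousOn_rpow_const_Icc {x y r : ℝ} (hx : 0 < x) :
    ContinuousOn (fun v : ℝ => v ^ r) (Icc x y) :=
  continuousOn_id.rpow_const fun _ hv => Or.inl (hx.trans_le hv.1).ne'

lemma integral_const_mul_rpow_neg_sub_one_le {x y q b : ℝ} (hx : 0 < x) (hxy : x ≤ y)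
    (hq : 0 < q) (hb : 0 ≤ b) : ∫ v in x..y, b * v ^ (-q - 1) ≤ b / (q * x ^ q) := by
  have hy : 0 ≤ y ^ (-q) := Real.rpow_nonneg (hx.le.trans hxy) _
  calc ∫ v in x..y, b * v ^ (-q - 1) = b * ((x ^ (-q) - y ^ (-q)) / q) := by
        rw [intervalIntegral.integral_const_mul, integral_rpow_neg_sub_one hx hxy hq]
    _ ≤ b * (x ^ (-q) / q) := by gcongr; linarith
    _ = b / (q * x ^ q) := by rw [Real.rpow_neg hx.le]; field_simp

lemma le_integral_of_const_mul_rpow_le {F : ℝ → ℝ} {x y q b : ℝ} (hx : 0 < x) (hxy : x ≤ y)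
    (hq : 0 < q) (hF : ContinuousOn F (Icc x y)) (h : ∀ v ∈ Icc x y, b * v ^ (-q - 1) ≤ F v) :
    b / q * (x ^ (-q) - y ^ (-q)) ≤ ∫ v in x..y, F v := by
  calc b / q * (x ^ (-q) - y ^ (-q)) = ∫ v in x..y, b * v ^ (-q - 1) := by
        rw [intervalIntegral.integral_const_mul, integral_rpow_neg_sub_one hx hxy hq]; ring
    _ ≤ ∫ v in x..y, F v :=
        integral_mono_of_continuousOn hxy
          (continuousOn_const.mul (continuousOn_rpow_const_Icc hx)) hF h

lemma integral_le_of_le_const_mul_rpow {F : ℝ → ℝ} {x y q b : ℝ} (hx : 0 < x) (hxy : x ≤ y)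
    (hq : 0 < q) (hb : 0 ≤ b) (hF : ContinuousOn F (Icc x y))
    (h : ∀ v ∈ Icc x y, F v ≤ b * v ^ (-q - 1)) :
    ∫ v in x..y, F v ≤ b / (q * x ^ q) :=
  (integral_mono_of_continuousOn hxy hF
    (continuousOn_const.mul (continuousOn_rpow_const_Icc hx)) h).trans
      (integral_const_mul_rpow_neg_sub_one_le hx hxy hq hb)

lemma rpow_neg_add_sub_one_sub_one {v : ℝ} (hv : 0 < v) (m n : ℝ) :
    v ^ (-(m + n - 1) - 1) = v ^ (-m) / v ^ n := by
  rw [show -(m + n - 1) - 1 = -m - n by ring, Real.rpow_sub hv]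

def E1rate (c : Cst) (s0 r0 : ℝ) (L1 N1 K1 L2 N2 K2 : (ℝ → ℝ) → ℝ → ℝ) (f1 f2 : ℝ → ℝ)
    (v : ℝ) : ℝ :=
  2 * c.a * v * (N1 f1 v / L1 f1 v)
    + c.D1 / Hf c s0 r0 L1 N1 K1 L2 N2 K2 f1 f2 * (K1 f1 v / (L1 f1 v * v ^ c.nu))

lemma E1f_eq_exp (c : Cst) (s0 r0 : ℝ) (L1 N1 K1 L2 N2 K2 : (ℝ → ℝ) → ℝ → ℝ) (f1 f2 : ℝ → ℝ)
    (η : ℝ) :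
    E1f c s0 r0 L1 N1 K1 L2 N2 K2 f1 f2 η
      = Real.exp (-∫ v in s0..η, E1rate c s0 r0 L1 N1 K1 L2 N2 K2 f1 f2 v) :=
  rfl

section

variable {c : Cst} {s0 r0 : ℝ} {L1 N1 K1 L2 N2 K2 : (ℝ → ℝ) → ℝ → ℝ} {f1 f2 : ℝ → ℝ}

lemma PosC.s0_pos (hpos : PosC c s0 r0) : 0 < s0 := hpos.2.2.2.2.1

lemma PosC.mu_add_nu_sub_one_pos (hpos : PosC c s0 r0) : 0 < c.mu + c.nu - 1 := by
  linarith [hpos.2.1, hpos.2.2.2.1]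

lemma Assum.pos_of_mem_Icc (hpos : PosC c s0 r0) (hA : Assum c s0 r0 L1 N1 K1 L2 N2 K2)
    (hf1 : f1 ∈ C1 s0 r0) {v : ℝ} (hv : v ∈ Icc s0 r0) :
    0 < L1 f1 v ∧ 0 < N1 f1 v ∧ 0 < K1 f1 v := by
  obtain ⟨-, -, -, -, hs0, -, -, -, -, -, -, hL1m, -, hN1m, -, hK1m, -⟩ := hpos
  have hv0 : 0 < v := hs0.trans_le hv.1
  obtain ⟨hL, -, hN, -, hK, -⟩ := hA.2.2.1 f1 hf1 v hv
  exact ⟨(by positivity : 0 < c.L1m * v ^ c.mu).trans_le hL,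
    (by positivity : 0 < c.N1m * v ^ (-c.mu)).trans_le hN,
    (by positivity : 0 < c.K1m * v ^ (-c.mu)).trans_le hK⟩

lemma Hinf_pos (hpos : PosC c s0 r0) : 0 < Hinf c s0 r0 := by
  obtain ⟨-, hν, -, hμ, hs0, hsr, -, -, -, -, -, -, -, -, -, hK1m, -⟩ := hpos
  exact mul_pos (div_pos hK1m (by linarith))
    (sub_pos.2 (Real.rpow_lt_rpow_of_neg hs0 hsr (by linarith)))

lemma Hinf_le_Hf (hpos : PosC c s0 r0) (hA : Assum c s0 r0 L1 N1 K1 L2 N2 K2)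
    (hf1 : f1 ∈ C1 s0 r0) (hf2 : f2 ∈ Mset r0) :
    Hinf c s0 r0 ≤ Hf c s0 r0 L1 N1 K1 L2 N2 K2 f1 f2 := by
  obtain ⟨-, hν, -, hμ, hs0, hsr, -, -, -, -, -, -, -, -, -, -, -, -, -, -, -, hK2m, -⟩ := hpos
  have hK1 : ContinuousOn (fun v => K1 f1 v / v ^ c.nu) (Icc s0 r0) :=
    (hA.1 f1 hf1).2.2.div (continuousOn_rpow_const_Icc hs0)
      fun v hv => (Real.rpow_pos_of_pos (hs0.trans_le hv.1) _).ne'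
  have h1 : Hinf c s0 r0 ≤ ∫ v in s0..r0, K1 f1 v / v ^ c.nu := by
    refine le_integral_of_const_mul_rpow_le hs0 hsr.le (by linarith) hK1 fun v hv => ?_
    have hv0 : 0 < v := hs0.trans_le hv.1
    rw [rpow_neg_add_sub_one_sub_one hv0, mul_div_assoc']
    gcongr
    exact (hA.2.2.1 f1 hf1 v hv).2.2.2.2.1
  have h2 : 0 ≤ ∫ v in Ioi r0, K2 f2 v / v ^ c.nu := by
    refine setIntegral_nonneg measurableSet_Ioi fun v hv => ?_
    have hv0 : 0 < v := (hs0.trans hsr).trans hv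
    have hK2 := (hA.2.2.2.1 f2 hf2 v (Ioi_subset_Ici_self hv)).2.2.2.2.1
    have : 0 < K2 f2 v := (by positivity : 0 < c.K2m * v ^ (-c.mu)).trans_le hK2
    positivity
  unfold Hf
  linarith

lemma Hf_pos (hpos : PosC c s0 r0) (hA : Assum c s0 r0 L1 N1 K1 L2 N2 K2)
    (hf1 : f1 ∈ C1 s0 r0) (hf2 : f2 ∈ Mset r0) : 0 < Hf c s0 r0 L1 N1 K1 L2 N2 K2 f1 f2 :=
  (Hinf_pos hpos).trans_le (Hinf_le_Hf hpos hA hf1 hf2)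

lemma continuousOn_E1rate (hpos : PosC c s0 r0) (hA : Assum c s0 r0 L1 N1 K1 L2 N2 K2)
    (hf1 : f1 ∈ C1 s0 r0) :
    ContinuousOn (E1rate c s0 r0 L1 N1 K1 L2 N2 K2 f1 f2) (Icc s0 r0) := by
  obtain ⟨hL, hN, hK⟩ := hA.1 f1 hf1
  have hs0 := hpos.s0_pos
  have hLv : ∀ v ∈ Icc s0 r0, 0 < L1 f1 v * v ^ c.nu := fun v hv =>
    mul_pos (hA.pos_of_mem_Icc hpos hf1 hv).1 (Real.rpow_pos_of_pos (hs0.trans_le hv.1) _)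
  exact ((continuousOn_const.mul continuousOn_id).mul
      (hN.div hL fun v hv => (hA.pos_of_mem_Icc hpos hf1 hv).1.ne')).add
    (continuousOn_const.mul
      (hK.div (hL.mul (continuousOn_rpow_const_Icc hs0)) fun v hv => (hLv v hv).ne'))

lemma E1rate_nonneg (hpos : PosC c s0 r0) (hA : Assum c s0 r0 L1 N1 K1 L2 N2 K2)
    (hf1 : f1 ∈ C1 s0 r0) (hf2 : f2 ∈ Mset r0) {v : ℝ} (hv : v ∈ Icc s0 r0) :
    0 ≤ E1rate c s0 r0 L1 N1 K1 L2 N2 K2 f1 f2 v := by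
  obtain ⟨hL, hN, hK⟩ := hA.pos_of_mem_Icc hpos hf1 hv
  have hH := Hf_pos hpos hA hf1 hf2
  obtain ⟨ha, -, -, -, hs0, -, hD1, -⟩ := hpos
  have hv0 : 0 < v := hs0.trans_le hv.1
  unfold E1rate
  positivity

lemma E1rate_le (hpos : PosC c s0 r0) (hA : Assum c s0 r0 L1 N1 K1 L2 N2 K2)
    (hf1 : f1 ∈ C1 s0 r0) (hf2 : f2 ∈ Mset r0) {v : ℝ} (hv : v ∈ Icc s0 r0) :
    E1rate c s0 r0 L1 N1 K1 L2 N2 K2 f1 f2 v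
      ≤ 2 * c.a * c.N1M / c.L1m * v ^ (-(2 * c.mu - 2) - 1)
        + c.D1 * c.K1M / (Hinf c s0 r0 * c.L1m) * v ^ (-(2 * c.mu + c.nu - 1) - 1) := by
  obtain ⟨hL, hN, hK⟩ := hA.pos_of_mem_Icc hpos hf1 hv
  have hHinf := Hinf_pos hpos
  have hHinf_le := Hinf_le_Hf hpos hA hf1 hf2
  obtain ⟨ha, -, -, -, hs0, -, hD1, -, -, -, -, hL1m, -⟩ := hpos
  obtain ⟨hLl, -, -, hNu, -, hKu⟩ := hA.2.2.1 f1 hf1 v hv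
  have hv0 : 0 < v := hs0.trans_le hv.1
  have hNM : 0 ≤ c.N1M * v ^ (-c.mu) := hN.le.trans hNu
  have hKM : 0 ≤ c.K1M * v ^ (-c.mu) := hK.le.trans hKu
  have hNterm : 2 * c.a * v * (N1 f1 v / L1 f1 v)
      ≤ 2 * c.a * c.N1M / c.L1m * v ^ (-(2 * c.mu - 2) - 1) := by
    calc 2 * c.a * v * (N1 f1 v / L1 f1 v)
        ≤ 2 * c.a * v * (c.N1M * v ^ (-c.mu) / (c.L1m * v ^ c.mu)) := by gcongr
      _ = 2 * c.a * c.N1M / c.L1m * v ^ (-(2 * c.mu - 2) - 1) := by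
        rw [show -(2 * c.mu - 2) - 1 = 1 + -c.mu + -c.mu by ring, Real.rpow_add hv0,
          Real.rpow_add hv0, Real.rpow_one, Real.rpow_neg hv0.le]
        field_simp
  have hKterm : c.D1 / Hf c s0 r0 L1 N1 K1 L2 N2 K2 f1 f2 * (K1 f1 v / (L1 f1 v * v ^ c.nu))
      ≤ c.D1 * c.K1M / (Hinf c s0 r0 * c.L1m) * v ^ (-(2 * c.mu + c.nu - 1) - 1) := by
    calc c.D1 / Hf c s0 r0 L1 N1 K1 L2 N2 K2 f1 f2 * (K1 f1 v / (L1 f1 v * v ^ c.nu))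
        ≤ c.D1 / Hinf c s0 r0 * (c.K1M * v ^ (-c.mu) / (c.L1m * v ^ c.mu * v ^ c.nu)) := by
          gcongr
      _ = c.D1 * c.K1M / (Hinf c s0 r0 * c.L1m) * v ^ (-(2 * c.mu + c.nu - 1) - 1) := by
        rw [show -(2 * c.mu + c.nu - 1) - 1 = -c.mu + -c.mu + -c.nu by ring, Real.rpow_add hv0,
          Real.rpow_add hv0, Real.rpow_neg hv0.le, Real.rpow_neg hv0.le]
        field_simp
  exact add_le_add hNterm hKterm

lemma integral_E1rate_le (hpos : PosC c s0 r0) (hA : Assum c s0 r0 L1 N1 K1 L2 N2 K2)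
    (hf1 : f1 ∈ C1 s0 r0) (hf2 : f2 ∈ Mset r0) {η : ℝ} (hη : η ∈ Icc s0 r0) :
    ∫ v in s0..η, E1rate c s0 r0 L1 N1 K1 L2 N2 K2 f1 f2 v
      ≤ c.a * c.N1M / (c.L1m * (c.mu - 1) * s0 ^ (2 * c.mu - 2))
        + c.D1 * c.K1M / (Hinf c s0 r0 * c.L1m * (2 * c.mu + c.nu - 1)
          * s0 ^ (2 * c.mu + c.nu - 1)) := by
  have hsub : Icc s0 η ⊆ Icc s0 r0 := Icc_subset_Icc_right hη.2
  have hHinf := Hinf_pos hpos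
  have hrate := continuousOn_E1rate (f2 := f2) hpos hA hf1
  have hrate_le := fun {v} (hv : v ∈ Icc s0 η) => E1rate_le hpos hA hf1 hf2 (hsub hv)
  obtain ⟨ha, hν, -, hμ, hs0, -, hD1, -, -, -, -, hL1m, -, -, hN1M, -, hK1M, -⟩ := hpos
  have hq₁ : 0 < 2 * c.mu - 2 := by linarith
  have hq₂ : 0 < 2 * c.mu + c.nu - 1 := by linarith
  have hpow : ∀ {q : ℝ} (b : ℝ), ContinuousOn (fun v : ℝ => b * v ^ (-q - 1)) (Icc s0 η) :=
    fun b => continuousOn_const.mul (continuousOn_rpow_const_Icc hs0)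
  calc ∫ v in s0..η, E1rate c s0 r0 L1 N1 K1 L2 N2 K2 f1 f2 v
      ≤ ∫ v in s0..η, (2 * c.a * c.N1M / c.L1m * v ^ (-(2 * c.mu - 2) - 1)
          + c.D1 * c.K1M / (Hinf c s0 r0 * c.L1m) * v ^ (-(2 * c.mu + c.nu - 1) - 1)) :=
        integral_mono_of_continuousOn hη.1 (hrate.mono hsub) ((hpow _).add (hpow _))
          fun _ hv => hrate_le hv
    _ = (∫ v in s0..η, 2 * c.a * c.N1M / c.L1m * v ^ (-(2 * c.mu - 2) - 1))
          + ∫ v in s0..η, c.D1 * c.K1M / (Hinf c s0 r0 * c.L1m)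
            * v ^ (-(2 * c.mu + c.nu - 1) - 1) :=
        intervalIntegral.integral_add ((hpow _).intervalIntegrable_of_Icc hη.1)
          ((hpow _).intervalIntegrable_of_Icc hη.1)
    _ ≤ 2 * c.a * c.N1M / c.L1m / ((2 * c.mu - 2) * s0 ^ (2 * c.mu - 2))
          + c.D1 * c.K1M / (Hinf c s0 r0 * c.L1m)
            / ((2 * c.mu + c.nu - 1) * s0 ^ (2 * c.mu + c.nu - 1)) :=
        add_le_add (integral_const_mul_rpow_neg_sub_one_le hs0 hη.1 hq₁ (by positivity))
          (integral_const_mul_rpow_neg_sub_one_le hs0 hη.1 hq₂ (by positivity))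
    _ = _ := by
        rw [show 2 * c.mu - 2 = 2 * (c.mu - 1) by ring]
        field_simp

lemma E1inf_le_E1f (hpos : PosC c s0 r0) (hA : Assum c s0 r0 L1 N1 K1 L2 N2 K2)
    (hf1 : f1 ∈ C1 s0 r0) (hf2 : f2 ∈ Mset r0) {η : ℝ} (hη : η ∈ Icc s0 r0) :
    E1inf c s0 r0 ≤ E1f c s0 r0 L1 N1 K1 L2 N2 K2 f1 f2 η := by
  rw [E1f_eq_exp]
  exact Real.exp_le_exp.2 (neg_le_neg (integral_E1rate_le hpos hA hf1 hf2 hη))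

lemma E1f_le_one (hpos : PosC c s0 r0) (hA : Assum c s0 r0 L1 N1 K1 L2 N2 K2)
    (hf1 : f1 ∈ C1 s0 r0) (hf2 : f2 ∈ Mset r0) {η : ℝ} (hη : η ∈ Icc s0 r0) :
    E1f c s0 r0 L1 N1 K1 L2 N2 K2 f1 f2 η ≤ 1 := by
  rw [E1f_eq_exp, Real.exp_le_one_iff, neg_nonpos]
  exact intervalIntegral.integral_nonneg hη.1 fun v hv =>
    E1rate_nonneg hpos hA hf1 hf2 (Icc_subset_Icc_right hη.2 hv)

lemma continuousOn_E1f (hpos : PosC c s0 r0) (hA : Assum c s0 r0 L1 N1 K1 L2 N2 K2)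
    (hf1 : f1 ∈ C1 s0 r0) :
    ContinuousOn (E1f c s0 r0 L1 N1 K1 L2 N2 K2 f1 f2) (Icc s0 r0) := by
  have hsr : s0 ≤ r0 := hpos.2.2.2.2.2.1.le
  have hprim := intervalIntegral.continuousOn_primitive_interval
    (μ := volume) (uIcc_of_le hsr ▸ (continuousOn_E1rate (f2 := f2) hpos hA hf1).integrableOn_Icc)
  rw [uIcc_of_le hsr] at hprim
  exact Real.continuous_exp.comp_continuousOn hprim.neg

lemma continuousOn_H1f_integrand (hpos : PosC c s0 r0) (hA : Assum c s0 r0 L1 N1 K1 L2 N2 K2)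
    (hf1 : f1 ∈ C1 s0 r0) :
    ContinuousOn (fun v => K1 f1 v / (v ^ c.nu * E1f c s0 r0 L1 N1 K1 L2 N2 K2 f1 f2 v))
      (Icc s0 r0) :=
  (hA.1 f1 hf1).2.2.div
    ((continuousOn_rpow_const_Icc hpos.s0_pos).mul (continuousOn_E1f hpos hA hf1))
    fun _ hv => (mul_pos (Real.rpow_pos_of_pos (hpos.s0_pos.trans_le hv.1) _)
      (Real.exp_pos _)).ne'

lemma le_H1f (hpos : PosC c s0 r0) (hA : Assum c s0 r0 L1 N1 K1 L2 N2 K2)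
    (hf1 : f1 ∈ C1 s0 r0) (hf2 : f2 ∈ Mset r0) {η : ℝ} (hη : η ∈ Icc s0 r0) :
    c.K1m / (c.mu + c.nu - 1) * (s0 ^ (-(c.mu + c.nu - 1)) - η ^ (-(c.mu + c.nu - 1)))
      ≤ H1f c s0 r0 L1 N1 K1 L2 N2 K2 f1 f2 η := by
  have hsub : Icc s0 η ⊆ Icc s0 r0 := Icc_subset_Icc_right hη.2
  have hs0 := hpos.s0_pos
  refine le_integral_of_const_mul_rpow_le hs0 hη.1 hpos.mu_add_nu_sub_one_pos
    ((continuousOn_H1f_integrand hpos hA hf1).mono hsub) fun v hv => ?_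
  have hv0 : 0 < v := hs0.trans_le hv.1
  have hK := (hA.2.2.1 f1 hf1 v (hsub hv)).2.2.2.2.1
  have hE1 := E1f_le_one hpos hA hf1 hf2 (hsub hv)
  have hE1pos : 0 < E1f c s0 r0 L1 N1 K1 L2 N2 K2 f1 f2 v := Real.exp_pos _
  rw [rpow_neg_add_sub_one_sub_one hv0, mul_div_assoc']
  calc c.K1m * v ^ (-c.mu) / v ^ c.nu ≤ K1 f1 v / v ^ c.nu := by gcongr
    _ ≤ K1 f1 v / (v ^ c.nu * E1f c s0 r0 L1 N1 K1 L2 N2 K2 f1 f2 v) := by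
      have := (hA.pos_of_mem_Icc hpos hf1 (hsub hv)).2.2
      gcongr
      exact mul_le_of_le_one_right (by positivity) hE1

lemma H1f_le (hpos : PosC c s0 r0) (hA : Assum c s0 r0 L1 N1 K1 L2 N2 K2)
    (hf1 : f1 ∈ C1 s0 r0) (hf2 : f2 ∈ Mset r0) {η : ℝ} (hη : η ∈ Icc s0 r0) :
    H1f c s0 r0 L1 N1 K1 L2 N2 K2 f1 f2 η ≤ H1sup c s0 r0 := by
  have hsub : Icc s0 η ⊆ Icc s0 r0 := Icc_subset_Icc_right hη.2
  have hs0 := hpos.s0_pos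
  have hK1M : 0 < c.K1M := by
    obtain ⟨-, -, -, -, -, -, -, -, -, -, -, -, -, -, -, -, hK1M, -⟩ := hpos
    exact hK1M
  have hE1inf : 0 < E1inf c s0 r0 := Real.exp_pos _
  calc H1f c s0 r0 L1 N1 K1 L2 N2 K2 f1 f2 η
      ≤ c.K1M / E1inf c s0 r0 / ((c.mu + c.nu - 1) * s0 ^ (c.mu + c.nu - 1)) := by
        refine integral_le_of_le_const_mul_rpow hs0 hη.1 hpos.mu_add_nu_sub_one_pos
          (by positivity)
          ((continuousOn_H1f_integrand hpos hA hf1).mono hsub) fun v hv => ?_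
        have hv0 : 0 < v := hs0.trans_le hv.1
        have hK := (hA.2.2.1 f1 hf1 v (hsub hv)).2.2.2.2.2
        have hE1 := E1inf_le_E1f hpos hA hf1 hf2 (hsub hv)
        have := (hA.pos_of_mem_Icc hpos hf1 (hsub hv)).2.2
        rw [rpow_neg_add_sub_one_sub_one hv0, div_mul_div_comm, mul_comm (v ^ c.nu)]
        gcongr
    _ = H1sup c s0 r0 := by
        rw [div_div, ← mul_assoc]
        rfl

end

theorem stmt6 (c : Cst) (s0 r0 : ℝ) (L1 N1 K1 L2 N2 K2 : (ℝ → ℝ) → ℝ → ℝ)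
    (hpos : PosC c s0 r0) (hA : Assum c s0 r0 L1 N1 K1 L2 N2 K2)
    (f1 f2 : ℝ → ℝ) (hf1 : f1 ∈ C1 s0 r0) (hf2 : f2 ∈ Mset r0) :
    ∀ η ∈ Set.Icc s0 r0,
      c.K1m / (c.mu + c.nu - 1) * (s0 ^ (-(c.mu + c.nu - 1)) - η ^ (-(c.mu + c.nu - 1)))
          ≤ H1f c s0 r0 L1 N1 K1 L2 N2 K2 f1 f2 η ∧
        H1f c s0 r0 L1 N1 K1 L2 N2 K2 f1 f2 η ≤ H1sup c s0 r0 :=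
  fun _ hη => ⟨le_H1f hpos hA hf1 hf2 hη, H1f_le hpos hA hf1 hf2 hη⟩
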